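/- Let 0 < a < 1 be given. There exist a constant K_5 = K_5(a) > 0 and β_0 > 0 such that for all 0 < β ≤ β_0 and all integers R with 1 ≤ R ≤ K_5 β^{−4}, E^{⊗2}_{(0,0)}[e^{2Φ(β)(B_R(S¹,S²)+1)} − 1] ≤ a, where Φ(β) = Λ(2β) − 2Λ(β). -/

import Mathlib

open MeasureTheory ProbabilityTheory Filter Real

noncomputable section

open scoped Classical in
/-- Indicator (as a real number) of a proposition. -/
noncomputable def ind (P : Prop) : ℝ := if P then 1 else 0

/-- A `±1` step of the simple random walk, encoded by a `Bool`. -/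
def rwStep (b : Bool) : ℤ := if b then 1 else -1

/-- Position at time `j` of the walk started at `x` with steps `σ`. -/
def pos (x : ℤ) {N : ℕ} (σ : Fin N → Bool) (j : ℕ) : ℤ :=
  x + ∑ i ∈ Finset.univ.filter (fun i : Fin N => (i : ℕ) < j), rwStep (σ i)

/-- Local time at `0` of the walk up to time `N`: `L_N = Σ_{j=1}^N 1_{S_j = 0}`. -/
def locTime (x : ℤ) {N : ℕ} (σ : Fin N → Bool) : ℝ :=
  ∑ j ∈ Finset.range N, ind (pos x σ (j + 1) = 0)

/-- Hamiltonian `H_N^u(S) = Σ_{j=1}^N (v(j,S_j) + u 1_{S_j=0})` in environment `V`. -/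
def hamil (u : ℝ) (V : ℕ × ℤ → ℝ) (x : ℤ) {N : ℕ} (σ : Fin N → Bool) : ℝ :=
  ∑ j ∈ Finset.range N,
    (V (j + 1, pos x σ (j + 1)) + u * ind (pos x σ (j + 1) = 0))

/-- Quenched partition function `Z_N^{β,u,q} = E_x[e^{β H_N^u(S)}]`, walk started at `x`. -/
def qZ (β u : ℝ) (V : ℕ × ℤ → ℝ) (N : ℕ) (x : ℤ) : ℝ :=
  (∑ σ : Fin N → Bool, Real.exp (β * hamil u V x σ)) / 2 ^ N

/-- Constrained partition function `Z_N(x,y;V) = E_x[e^{β H_N^u(S)} 1_{S_N=y}]`. -/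
def qZc (β u : ℝ) (V : ℕ × ℤ → ℝ) (N : ℕ) (x y : ℤ) : ℝ :=
  (∑ σ : Fin N → Bool, ind (pos x σ N = y) * Real.exp (β * hamil u V x σ)) / 2 ^ N

/-- Homogeneous pinning partition function `E_x[e^{γ L_N(S)}]`. -/
def homZ (γ : ℝ) (N : ℕ) (x : ℤ) : ℝ :=
  (∑ σ : Fin N → Bool, Real.exp (γ * locTime x σ)) / 2 ^ N

/-- Space-time shift of the environment: `(θ_{n,y}V)(k,z) = V(k+n, z+y)`. -/
def envShift (n : ℕ) (y : ℤ) (V : ℕ × ℤ → ℝ) : ℕ × ℤ → ℝ :=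
  fun p => V (p.1 + n, p.2 + y)

/-- Log moment generating function `Λ(β) = log E^Q[e^{β v(1,0)}]` of the disorder. -/
def logMGF (Q : Measure ((ℕ × ℤ) → ℝ)) (β : ℝ) : ℝ :=
  Real.log (∫ V, Real.exp (β * V (1, 0)) ∂Q)

/-- Assumptions on the disorder law `Q`: the environment variables are i.i.d.,
with mean `0`, variance `1`, and all exponential moments finite. -/
structure EnvAssumptions (Q : Measure ((ℕ × ℤ) → ℝ)) : Prop where
  prob : IsProbabilityMeasure Q
  indep : iIndepFun (fun p (V : (ℕ × ℤ) → ℝ) => V p) Q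
  ident : ∀ p : ℕ × ℤ, IdentDistrib (fun V : (ℕ × ℤ) → ℝ => V p)
      (fun V : (ℕ × ℤ) → ℝ => V (1, 0)) Q Q
  mean_zero : ∫ V, V (1, 0) ∂Q = 0
  variance_one : ∫ V, (V (1, 0)) ^ 2 ∂Q = 1
  exp_moment : ∀ β : ℝ, Integrable (fun V : (ℕ × ℤ) → ℝ => Real.exp (β * V (1, 0))) Q

/-- Overlap `B_R(s¹,s²) = Σ_{i=1}^R 1_{s¹_i = s²_i}` of two walks of length `R`, both
started at `0`. -/
def overlap {R : ℕ} (σ τ : Fin R → Bool) : ℝ :=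
  ∑ j ∈ Finset.range R, ind (pos 0 σ (j + 1) = pos 0 τ (j + 1))

/-- `E^{⊗2}_{(0,0)}[e^{c (B_R + 1)} − 1]` for two independent SSRWs started at `0`. -/
def overlapExp (c : ℝ) (R : ℕ) : ℝ :=
  (∑ στ : (Fin R → Bool) × (Fin R → Bool),
    (Real.exp (c * (overlap στ.1 στ.2 + 1)) - 1)) / 4 ^ R

/-!
`Φ(β) = cgf(2β) - 2 cgf(β)` is nonnegative by Cauchy–Schwarz (`mgf(β)² ≤ mgf(2β)`) and at most
`cgf(2β) = O(β²)`, by Taylor's formula at `0`, where `cgf` and (as `E v = 0`) `cgf'` vanish.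

For the overlap, `Z_n = E[e^{c B_n}]` satisfies the renewal equation
`Z_n = 1 + (e^c - 1) Σ_{s=1}^n u_s Z_{n-s}` with `u_s = P(S¹_s = S²_s) = C(2s,s)/4^s ≤ s^{-1/2}`:
expand `e^{c B_n} - 1` over the meeting times `s` and restart both walks there (Markov property).
By induction `Z_n ≤ 1/(1 - ρ)` for `n ≤ R`, where `ρ = (e^c - 1) Σ_{s ≤ R} u_s ≤ 4c√R`.
With `c = 2Φ(β) = O(β²)` and `R ≤ K β⁻⁴`, `ρ` is as small as we like.
-/

open Finset

namespace ProbabilityTheory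

variable {Ω : Type*} [MeasurableSpace Ω] {μ : Measure Ω} {X : Ω → ℝ}

lemma sq_mgf_le_mgf_two_mul [IsProbabilityMeasure μ] {t : ℝ} (hX : AEMeasurable X μ)
    (h : Integrable (fun ω ↦ exp (2 * t * X ω)) μ) : mgf X μ t ^ 2 ≤ mgf X μ (2 * t) := by
  have hsq : ∀ ω, exp (t * X ω) ^ 2 = exp (2 * t * X ω) := fun ω ↦ by
    rw [← exp_nat_mul]; ring_nf
  have hL2 : MemLp (fun ω ↦ exp (t * X ω)) 2 μ := by
    rw [memLp_two_iff_integrable_sq (by fun_prop)]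
    simpa only [hsq] using h
  have := variance_nonneg (fun ω ↦ exp (t * X ω)) μ
  rw [variance_eq_sub hL2] at this
  simpa only [mgf, Pi.pow_apply, hsq, sub_nonneg] using this

lemma two_mul_cgf_le_cgf_two_mul [IsProbabilityMeasure μ] {t : ℝ} (hX : AEMeasurable X μ)
    (ht : Integrable (fun ω ↦ exp (t * X ω)) μ) (h : Integrable (fun ω ↦ exp (2 * t * X ω)) μ) :
    2 * cgf X μ t ≤ cgf X μ (2 * t) := by
  rw [cgf, cgf, ← Nat.cast_ofNat, ← log_pow]
  exact log_le_log (pow_pos (mgf_pos ht) 2) (sq_mgf_le_mgf_two_mul hX h)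

lemma iteratedDeriv_two_cgf_nonneg {v : ℝ} (h : v ∈ interior (integrableExpSet X μ)) :
    0 ≤ iteratedDeriv 2 (cgf X μ) v := by
  rw [iteratedDeriv_two_cgf_eq_integral h]
  exact div_nonneg (integral_nonneg fun ω ↦ by positivity) (mgf_nonneg)

lemma exists_cgf_le_mul_sq [IsProbabilityMeasure μ] (h0 : μ[X] = 0)
    (hexp : ∀ t, Integrable (fun ω ↦ exp (t * X ω)) μ) (T : ℝ) :
    ∃ C, ∀ t ∈ Set.Icc 0 T, 0 ≤ cgf X μ t ∧ cgf X μ t ≤ C * t ^ 2 := by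
  have hint : interior (integrableExpSet X μ) = Set.univ := by
    rw [show integrableExpSet X μ = Set.univ from Set.eq_univ_of_forall hexp, interior_univ]
  have hanalytic : AnalyticOnNhd ℝ (cgf X μ) Set.univ := hint ▸ analyticOnNhd_cgf
  have hcont : Continuous (iteratedDeriv 2 (cgf X μ)) :=
    (hanalytic.contDiff (n := 2)).continuous_iteratedDeriv 2 le_rfl
  obtain ⟨C, hC⟩ :=
    (isCompact_Icc (a := (0 : ℝ)) (b := T)).exists_bound_of_continuousOn hcont.continuousOn
  refine ⟨C, fun t ⟨ht0, htT⟩ ↦ ?_⟩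
  rcases ht0.eq_or_lt with rfl | htpos
  · simp [cgf_zero]
  obtain ⟨u, hu, hcgf⟩ := exists_cgf_eq_iteratedDeriv_two_cgf_mul htpos h0 (by simp [hint])
  have hu0 : 0 ≤ iteratedDeriv 2 (cgf X μ) u := iteratedDeriv_two_cgf_nonneg (by simp [hint])
  have huC : iteratedDeriv 2 (cgf X μ) u ≤ C :=
    (le_abs_self _).trans (hC u ⟨hu.1.le, hu.2.le.trans htT⟩)
  rw [hcgf]
  constructor
  · positivity
  · nlinarith [sq_nonneg t]

end ProbabilityTheory

lemma pos_append {s d : ℕ} (x : ℤ) (α : Fin s → Bool) (γ : Fin d → Bool) (j : ℕ) :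
    pos x (Fin.append α γ) j = pos x α j + pos 0 γ (j - s) := by
  simp only [pos, Finset.sum_filter, Fin.sum_univ_add, Fin.append_left, Fin.append_right,
    Fin.val_castAdd, Fin.val_natAdd, zero_add, add_assoc]
  congr 2
  refine Finset.sum_congr rfl fun i _ ↦ ?_
  simp only [Nat.lt_sub_iff_add_lt']

lemma pos_of_le {N : ℕ} (x : ℤ) (σ : Fin N → Bool) {j : ℕ} (hj : N ≤ j) :
    pos x σ j = pos x σ N := by
  simp only [pos, Finset.sum_filter]
  congr 1
  refine Finset.sum_congr rfl fun i _ ↦ ?_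
  simp [i.2, i.2.trans_le hj]

lemma pos_eq_two_mul_card_sub {N : ℕ} (σ : Fin N → Bool) :
    pos 0 σ N = 2 * #{i | σ i} - N := by
  have hcard := card_filter_add_card_filter_not (s := univ) (fun i : Fin N ↦ σ i = true)
  simp only [card_univ, Fintype.card_fin] at hcard
  simp only [pos, filter_true_of_mem (fun (i : Fin N) _ ↦ i.2), zero_add, rwStep, sum_ite,
    sum_const, smul_neg, nsmul_eq_mul, mul_one]
  push_cast [← hcard]
  ring

lemma card_fun_bool_card_eq_choose (N k : ℕ) :
    #{σ : Fin N → Bool | #{i | σ i} = k} = N.choose k := by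
  rw [show N.choose k = #(powersetCard k (univ : Finset (Fin N))) by simp]
  refine card_nbij' (fun σ ↦ ({i | σ i} : Finset (Fin N))) (fun A i ↦ decide (i ∈ A))
    ?_ ?_ ?_ ?_ <;> intro <;> simp [mem_powersetCard]

lemma card_pairs_card_eq_centralBinom (N : ℕ) :
    #{p : (Fin N → Bool) × (Fin N → Bool) | #{i | p.1 i} = #{i | p.2 i}} = N.centralBinom := by
  rw [card_eq_sum_card_fiberwise (f := fun p ↦ #{i | p.1 i}) (t := range (N + 1))
    fun p _ ↦ mem_range.2 (Nat.lt_succ_of_le ((card_le_univ _).trans_eq (Fintype.card_fin N)))]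
  calc _ = ∑ k ∈ range (N + 1), N.choose k ^ 2 := sum_congr rfl fun k _ ↦ by
          rw [sq, ← card_fun_bool_card_eq_choose, ← card_product]
          congr 1
          ext p
          simp only [mem_filter, mem_univ, true_and, mem_product]
          constructor
          · rintro ⟨h, rfl⟩; exact ⟨rfl, h.symm⟩
          · rintro ⟨h₁, h₂⟩; exact ⟨h₁.trans h₂.symm, h₁⟩
    _ = N.centralBinom := by rw [Nat.sum_range_choose_sq, Nat.centralBinom_eq_two_mul_choose]

lemma sum_ind_pos_eq_centralBinom (N : ℕ) :
    ∑ p : (Fin N → Bool) × (Fin N → Bool), ind (pos 0 p.1 N = pos 0 p.2 N) = N.centralBinom := by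
  have hpos : ∀ p : (Fin N → Bool) × (Fin N → Bool),
      pos 0 p.1 N = pos 0 p.2 N ↔ #{i | p.1 i} = #{i | p.2 i} := fun p ↦ by
    rw [pos_eq_two_mul_card_sub, pos_eq_two_mul_card_sub]; omega
  simp only [ind, hpos, sum_boole, card_pairs_card_eq_centralBinom]

lemma ind_eq_zero {P : Prop} (h : ¬P) : ind P = 0 := if_neg h

lemma pos_zero {N : ℕ} (x : ℤ) (σ : Fin N → Bool) : pos x σ 0 = x := by
  simp [pos]

def tailOverlap {N : ℕ} (t : ℕ) (σ τ : Fin N → Bool) : ℝ :=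
  ∑ i ∈ Ico t N, ind (pos 0 σ (i + 1) = pos 0 τ (i + 1))

lemma tailOverlap_append {s d : ℕ} {α β : Fin s → Bool} (γ δ : Fin d → Bool)
    (h : pos 0 α s = pos 0 β s) :
    tailOverlap s (Fin.append α γ) (Fin.append β δ) = overlap γ δ := by
  rw [tailOverlap, sum_Ico_eq_sum_range, Nat.add_sub_cancel_left, overlap]
  refine sum_congr rfl fun i _ ↦ ?_
  rw [pos_append, pos_append, pos_of_le 0 α (by omega), pos_of_le 0 β (by omega), h,
    add_assoc, Nat.add_sub_cancel_left, add_right_inj]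

/-- Markov property at the fixed time `s`: after the walks meet, their overlap is that of two
fresh walks. -/
lemma sum_ind_pos_mul_tailOverlap (f : ℝ → ℝ) {s d n : ℕ} (hn : s + d = n) :
    ∑ p : (Fin n → Bool) × (Fin n → Bool),
        ind (pos 0 p.1 s = pos 0 p.2 s) * f (tailOverlap s p.1 p.2)
      = s.centralBinom * ∑ q : (Fin d → Bool) × (Fin d → Bool), f (overlap q.1 q.2) := by
  subst hn
  let e := Fin.appendEquiv (α := Bool) s d
  let E := (Equiv.prodProdProdComm _ _ _ _).trans (e.prodCongr e)
  rw [← sum_ind_pos_eq_centralBinom, Fintype.sum_mul_sum, ← Fintype.sum_prod_type']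
  refine (Fintype.sum_equiv E _ _ fun ⟨⟨α, β⟩, γ, δ⟩ ↦ ?_).symm
  change _ = ind (pos 0 (Fin.append α γ) s = pos 0 (Fin.append β δ) s) *
    f (tailOverlap s (Fin.append α γ) (Fin.append β δ))
  rw [pos_append, pos_append, Nat.sub_self, pos_zero, pos_zero, add_zero, add_zero]
  by_cases h : pos 0 α s = pos 0 β s
  · rw [tailOverlap_append γ δ h]
  · rw [ind_eq_zero h, zero_mul, zero_mul]

lemma exp_sum_range_sub_one (a : ℕ → ℝ) (n : ℕ) :
    exp (∑ i ∈ range n, a i) - 1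
      = ∑ j ∈ range n, (exp (a j) - 1) * exp (∑ i ∈ Ico (j + 1) n, a i) := by
  have hstep : ∀ j ∈ range n, exp (∑ i ∈ Ico j n, a i) - exp (∑ i ∈ Ico (j + 1) n, a i)
      = (exp (a j) - 1) * exp (∑ i ∈ Ico (j + 1) n, a i) := fun j hj ↦ by
    rw [sum_eq_sum_Ico_succ_bot (mem_range.1 hj), exp_add]; ring
  rw [← sum_congr rfl hstep, sum_range_sub', range_eq_Ico, Ico_self, sum_empty, exp_zero]

lemma exp_mul_ind_sub_one (c : ℝ) (P : Prop) : exp (c * ind P) - 1 = ind P * (exp c - 1) := by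
  by_cases h : P <;> simp [ind, h]

lemma sum_pairs_const_one (n : ℕ) : ∑ _p : (Fin n → Bool) × (Fin n → Bool), (1 : ℝ) = 4 ^ n := by
  simp [← mul_pow]

/-- `P(S¹_s = S²_s)`, see `sum_ind_pos_eq_centralBinom`. -/
def meetProb (s : ℕ) : ℝ := s.centralBinom / 4 ^ s

def overlapMGF (c : ℝ) (n : ℕ) : ℝ :=
  (∑ p : (Fin n → Bool) × (Fin n → Bool), exp (c * overlap p.1 p.2)) / 4 ^ n

lemma exp_mul_overlap_sub_one (c : ℝ) {n : ℕ} (σ τ : Fin n → Bool) :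
    exp (c * overlap σ τ) - 1 = (exp c - 1) * ∑ j ∈ range n,
      ind (pos 0 σ (j + 1) = pos 0 τ (j + 1)) * exp (c * tailOverlap (j + 1) σ τ) := by
  simp only [overlap, tailOverlap, mul_sum, exp_sum_range_sub_one, exp_mul_ind_sub_one]
  refine sum_congr rfl fun j _ ↦ by ring

lemma overlapMGF_eq (c : ℝ) (n : ℕ) :
    overlapMGF c n
      = 1 + (exp c - 1) * ∑ j ∈ range n, meetProb (j + 1) * overlapMGF c (n - (j + 1)) := by
  have hsum : ∑ p : (Fin n → Bool) × (Fin n → Bool), exp (c * overlap p.1 p.2)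
      = 4 ^ n + (exp c - 1) * ∑ j ∈ range n, ((j + 1).centralBinom *
          ∑ q : (Fin (n - (j + 1)) → Bool) × (Fin (n - (j + 1)) → Bool),
            exp (c * overlap q.1 q.2)) := by
    rw [← sub_eq_iff_eq_add', ← sum_pairs_const_one, ← sum_sub_distrib]
    simp only [exp_mul_overlap_sub_one, ← mul_sum]
    rw [sum_comm]
    refine congrArg _ (sum_congr rfl fun j hj ↦ ?_)
    exact sum_ind_pos_mul_tailOverlap (fun x ↦ exp (c * x)) (by have := mem_range.1 hj; omega)
  rw [overlapMGF, hsum, add_div, div_self (by positivity), mul_div_assoc, sum_div]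
  refine congrArg (1 + (exp c - 1) * ·) (sum_congr rfl fun j hj ↦ ?_)
  have hpow : (4 : ℝ) ^ n = 4 ^ (j + 1) * 4 ^ (n - (j + 1)) := by
    rw [← pow_add, Nat.add_sub_cancel' (mem_range.1 hj)]
  rw [meetProb, overlapMGF, hpow]
  field_simp

lemma le_inv_one_sub_of_renewal {Z u : ℕ → ℝ} {ε ρ : ℝ} {R : ℕ} (hε : 0 ≤ ε)
    (hu : ∀ s, 0 ≤ u s) (hρ : ρ < 1) (hR : ε * ∑ j ∈ range R, u (j + 1) ≤ ρ)
    (hZ : ∀ n, Z n = 1 + ε * ∑ j ∈ range n, u (j + 1) * Z (n - (j + 1))) {n : ℕ} (hn : n ≤ R) :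
    Z n ≤ (1 - ρ)⁻¹ := by
  induction n using Nat.strong_induction_on with
  | _ n ih =>
  have hρ' : 0 < 1 - ρ := sub_pos.2 hρ
  have hpartial : ε * ∑ j ∈ range n, u (j + 1) ≤ ρ :=
    (mul_le_mul_of_nonneg_left (sum_le_sum_of_subset_of_nonneg (range_subset_range.2 hn)
      fun j _ _ ↦ hu _) hε).trans hR
  calc Z n ≤ 1 + ε * ∑ j ∈ range n, u (j + 1) * (1 - ρ)⁻¹ := by
        rw [hZ]
        gcongr with j hj
        · exact hu _
        · exact ih _ (by have := mem_range.1 hj; omega) (by omega)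
    _ ≤ 1 + ρ * (1 - ρ)⁻¹ := by
        rw [← sum_mul, ← mul_assoc]
        gcongr
    _ = (1 - ρ)⁻¹ := by field_simp; ring

lemma centralBinom_sq_mul_le (n : ℕ) : n.centralBinom ^ 2 * (2 * n + 1) ≤ 16 ^ n := by
  induction n with
  | zero => simp
  | succ n ih =>
    refine Nat.le_of_mul_le_mul_left ?_ (by positivity : 0 < (n + 1) ^ 2)
    calc (n + 1) ^ 2 * ((n + 1).centralBinom ^ 2 * (2 * (n + 1) + 1))
        = ((n + 1) * (n + 1).centralBinom) ^ 2 * (2 * n + 3) := by ring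
      _ = (4 * (2 * n + 1) * (2 * n + 3)) * (n.centralBinom ^ 2 * (2 * n + 1)) := by
          rw [Nat.succ_mul_centralBinom_succ]; ring
      _ ≤ (4 * (2 * n + 1) * (2 * n + 3)) * 16 ^ n := Nat.mul_le_mul_left _ ih
      _ ≤ (16 * (n + 1) ^ 2) * 16 ^ n := Nat.mul_le_mul_right _ (by nlinarith)
      _ = (n + 1) ^ 2 * 16 ^ (n + 1) := by ring

lemma meetProb_le_inv_sqrt {s : ℕ} (hs : s ≠ 0) : meetProb s ≤ (√s)⁻¹ := by
  have hsq : meetProb s ^ 2 * (2 * s + 1) ≤ 1 := by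
    rw [meetProb, div_pow, ← pow_mul, mul_comm s 2, pow_mul, div_mul_eq_mul_div,
      div_le_one (by positivity)]
    exact_mod_cast centralBinom_sq_mul_le s
  rw [← Real.sqrt_inv]
  refine Real.le_sqrt_of_sq_le ?_
  have hs' : (1 : ℝ) ≤ s := by exact_mod_cast Nat.one_le_iff_ne_zero.2 hs
  rw [inv_eq_one_div, le_div_iff₀ (by positivity)]
  nlinarith [sq_nonneg (meetProb s)]

lemma sum_range_inv_sqrt_succ_le (R : ℕ) : ∑ j ∈ range R, (√(j + 1))⁻¹ ≤ 2 * √R := by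
  induction R with
  | zero => simp
  | succ R ih =>
    have hR : √(R + 1) ^ 2 = R + 1 := Real.sq_sqrt (by positivity)
    have hpos : 0 < √(R + 1) := Real.sqrt_pos.2 (by positivity)
    have hstep : (√(R + 1))⁻¹ ≤ 2 * √(R + 1) - 2 * √R := by
      rw [inv_le_iff_one_le_mul₀' hpos]
      nlinarith [Real.sq_sqrt (Nat.cast_nonneg R)]
    rw [sum_range_succ, Nat.cast_succ]
    linarith

lemma sum_meetProb_le (R : ℕ) : ∑ j ∈ range R, meetProb (j + 1) ≤ 2 * √R :=
  (sum_le_sum fun j _ ↦ by exact_mod_cast meetProb_le_inv_sqrt j.succ_ne_zero).trans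
    (sum_range_inv_sqrt_succ_le R)

lemma overlapExp_eq (c : ℝ) (R : ℕ) : overlapExp c R = exp c * overlapMGF c R - 1 := by
  simp only [overlapExp, overlapMGF, mul_add, mul_one, exp_add, sum_sub_distrib,
    sum_pairs_const_one, ← sum_mul]
  field_simp

lemma overlapExp_le_of_mul_sqrt_le {c a : ℝ} {R : ℕ} (hc : 0 ≤ c) (hR : 1 ≤ R) (ha : a ≤ 2)
    (h : 16 * c * √R ≤ a) : overlapExp c R ≤ a := by
  have hsqrt : 1 ≤ √R := Real.one_le_sqrt.2 (by exact_mod_cast hR)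
  have hca : 16 * c ≤ a := by nlinarith
  have hε0 : 0 ≤ exp c - 1 := by linarith [add_one_le_exp c]
  have hε : exp c - 1 ≤ 2 * c := by
    have := abs_exp_sub_one_le (x := c) (by rw [abs_of_nonneg hc]; linarith)
    rwa [abs_of_nonneg hε0, abs_of_nonneg hc] at this
  have hρ : (exp c - 1) * ∑ j ∈ range R, meetProb (j + 1) ≤ a / 4 :=
    calc _ ≤ 2 * c * (2 * √R) :=
          mul_le_mul hε (sum_meetProb_le R) (sum_nonneg fun j _ ↦ by unfold meetProb; positivity)
            (by positivity)
      _ ≤ a / 4 := by linarith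
  have hZ : overlapMGF c R ≤ (1 - a / 4)⁻¹ :=
    le_inv_one_sub_of_renewal hε0 (fun s ↦ by unfold meetProb; positivity) (by linarith) hρ
      (overlapMGF_eq c) le_rfl
  have hZ0 : 0 ≤ overlapMGF c R := by unfold overlapMGF; positivity
  rw [overlapExp_eq]
  calc exp c * overlapMGF c R - 1 ≤ (1 + a / 8) * (1 - a / 4)⁻¹ - 1 := by
        gcongr
        · linarith
        · linarith
    _ ≤ a := by
        rw [← div_eq_mul_inv, sub_le_iff_le_add, div_le_iff₀ (by linarith)]
        nlinarith

lemma exists_logMGF_two_mul_sub_le {Q : Measure ((ℕ × ℤ) → ℝ)} (hQ : EnvAssumptions Q) :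
    ∃ C > 0, ∀ β : ℝ, 0 ≤ β → β ≤ 1 →
      0 ≤ logMGF Q (2 * β) - 2 * logMGF Q β ∧ logMGF Q (2 * β) - 2 * logMGF Q β ≤ C * β ^ 2 := by
  have := hQ.prob
  have hX : AEMeasurable (fun V : (ℕ × ℤ) → ℝ ↦ V (1, 0)) Q :=
    (measurable_pi_apply _).aemeasurable
  obtain ⟨C, hC⟩ := exists_cgf_le_mul_sq hQ.mean_zero hQ.exp_moment 2
  refine ⟨4 * max C 1, by positivity, fun β hβ0 hβ1 ↦ ⟨?_, ?_⟩⟩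
  · exact sub_nonneg.2 (two_mul_cgf_le_cgf_two_mul hX (hQ.exp_moment β) (hQ.exp_moment _))
  · obtain ⟨-, hcgf⟩ := hC (2 * β) ⟨by positivity, by linarith⟩
    obtain ⟨hcgf₀, -⟩ := hC β ⟨hβ0, by linarith⟩
    change cgf _ Q (2 * β) - 2 * cgf _ Q β ≤ _
    nlinarith [le_max_left C 1, sq_nonneg β]

/-- Let `0 < a < 1`. There exist `K₅ = K₅(a) > 0` and `β₀ > 0` such that for
all `0 < β ≤ β₀` and all integers `1 ≤ R ≤ K₅ β^{−4}`,
`E^{⊗2}_{(0,0)}[e^{2Φ(β)(B_R+1)} − 1] ≤ a`, where `Φ(β) = Λ(2β) − 2Λ(β)`. -/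
theorem overlap_second_moment_bound
    (Q : Measure ((ℕ × ℤ) → ℝ)) (hQ : EnvAssumptions Q)
    (a : ℝ) (ha0 : 0 < a) (ha1 : a < 1) :
    ∃ K₅ > 0, ∃ β₀ > 0, ∀ β : ℝ, 0 < β → β ≤ β₀ →
      ∀ R : ℕ, 1 ≤ R → (R : ℝ) ≤ K₅ / β ^ 4 →
        overlapExp (2 * (logMGF Q (2 * β) - 2 * logMGF Q β)) R ≤ a := by
  obtain ⟨C, hC, hΦ⟩ := exists_logMGF_two_mul_sub_le hQ
  refine ⟨(a / (32 * C)) ^ 2, by positivity, 1, one_pos, fun β hβ hβ1 R hR hRK ↦ ?_⟩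
  obtain ⟨hΦ₀, hΦC⟩ := hΦ β hβ.le hβ1
  have hβR : β ^ 2 * √R ≤ a / (32 * C) := by
    rw [← pow_le_pow_iff_left₀ (by positivity) (by positivity) two_ne_zero, mul_pow,
      Real.sq_sqrt (Nat.cast_nonneg _), ← pow_mul]
    rwa [le_div_iff₀ (by positivity), mul_comm] at hRK
  refine overlapExp_le_of_mul_sqrt_le (by linarith) hR (by linarith) ?_
  calc 16 * (2 * (logMGF Q (2 * β) - 2 * logMGF Q β)) * √R ≤ 32 * C * (β ^ 2 * √R) := by
        nlinarith [Real.sqrt_nonneg R]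
    _ ≤ a := by rw [le_div_iff₀ (by positivity)] at hβR; linarith
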